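/- arXiv:2011.14210 — 3 statements merged into one kernel-verified Lean document; each statement's English description precedes it below -/
import Mathlib

section
/- Let p be a prime and α ≥ 1 with α < p such that π(p − α) ≠ π(p + α) − 1. Then every m with π(p − m) = π(p + m) − 1 and m ≥ 1 satisfies m < α; in particular D(p) < α. -/
open Nat

/-- X(p): set of m ≥ 1 with π(p − m) = π(p + m) − 1. -/
def insX (p : ℕ) : Set ℕ :=
  {m | 1 ≤ m ∧ Nat.primeCounting (p - m) = Nat.primeCounting (p + m) - 1}

/-- Degree of insulation: the maximum (sSup) of X(p). -/
noncomputable def degIns (p : ℕ) : ℕ := sSup (insX p)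

open scoped Nat.Prime

theorem Nat.primeCounting_sub_one_add_one {p : ℕ} (hp : p.Prime) : π (p - 1) + 1 = π p := by
  rw [primeCounting_sub_one, primeCounting_eq_primeCounting'_succ, primeCounting', count_succ,
    if_pos hp]

theorem Nat.primeCounting_sub_lt_primeCounting_add {p a : ℕ} (hp : p.Prime) (ha : 1 ≤ a) (b : ℕ) :
    π (p - a) < π (p + b) :=
  calc π (p - a) ≤ π (p - 1) := monotone_primeCounting (Nat.sub_le_sub_left ha p)
    _ < π p := primeCounting_sub_one_add_one hp ▸ lt_add_one _
    _ ≤ π (p + b) := monotone_primeCounting (le_add_right p b)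

/-- `π (p + m) - π (p - m)` is monotone in `m` and, since `p` itself is counted, positive for
`m ≥ 1`; so it stays equal to `1` when `m` decreases. -/
theorem mem_insX_of_le {p a b : ℕ} (hp : p.Prime) (ha : 1 ≤ a) (hab : a ≤ b) (hb : b ∈ insX p) :
    a ∈ insX p := by
  have hsub := monotone_primeCounting (Nat.sub_le_sub_left hab p)
  have hadd := monotone_primeCounting (Nat.add_le_add_left hab p)
  have hpos := primeCounting_sub_lt_primeCounting_add hp ha a
  exact ⟨ha, by have := hb.2; omega⟩

/-- If `insX p` is empty, `degIns p = sSup ∅ = 0`. -/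
theorem degIns_lt_of_forall_mem_lt {p a : ℕ} (ha : 0 < a) (h : ∀ m ∈ insX p, m < a) :
    degIns p < a := by
  have : degIns p ≤ a - 1 := csSup_le' fun m hm => Nat.le_sub_one_of_lt (h m hm)
  omega

theorem degIns_lt_of_fail_general (p α : ℕ) (hp : p.Prime) (hα1 : 1 ≤ α)
    (h : Nat.primeCounting (p - α) ≠ Nat.primeCounting (p + α) - 1) :
    (∀ m : ℕ, 1 ≤ m → Nat.primeCounting (p - m) = Nat.primeCounting (p + m) - 1 → m < α) ∧
    degIns p < α := by
  have hlt : ∀ m ∈ insX p, m < α := fun m hm =>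
    lt_of_not_ge fun hαm => h (mem_insX_of_le hp hα1 hαm hm).2
  exact ⟨fun m hm hmX => hlt m ⟨hm, hmX⟩, degIns_lt_of_forall_mem_lt hα1 hlt⟩

theorem degIns_lt_of_fail (p α : ℕ) (hp : p.Prime) (hα1 : 1 ≤ α) (hαp : α < p)
    (h : Nat.primeCounting (p - α) ≠ Nat.primeCounting (p + α) - 1) :
    (∀ m : ℕ, 1 ≤ m → Nat.primeCounting (p - m) = Nat.primeCounting (p + m) - 1 → m < α) ∧
    degIns p < α :=
  degIns_lt_of_fail_general p α hp hα1 h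
end

section
/- Let p be a prime with D(p) even and well-defined. Then p − D(p) is prime or p + D(p) is prime. -/
/-
If `p - D` were not prime, `π (p - D)` would not drop when the radius grows from `D` to `D + 1`;
and `π (p + D)` does not grow either, since `p + D + 1` is even and larger than `2`.
So `D + 1` would still satisfy the defining equation, against the maximality of `D`.
Hence `p - D` is prime.
-/

open Nat

open scoped Nat.Prime

namespace Nat

theorem primeCounting_succ (n : ℕ) :
    π (n + 1) = π n + if (n + 1).Prime then 1 else 0 :=
  count_succ _ _

theorem primeCounting_succ_of_not_prime {n : ℕ} (h : ¬(n + 1).Prime) : π (n + 1) = π n := by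
  simp [primeCounting_succ, h]

/-- Truncated subtraction makes this hold also for `m ≥ n`, where both sides are `π 0`. -/
theorem primeCounting_sub_succ_of_not_prime {n m : ℕ} (h : ¬(n - m).Prime) :
    π (n - (m + 1)) = π (n - m) := by
  rcases Nat.lt_or_ge m n with hmn | hmn
  · obtain ⟨k, hk⟩ : ∃ k, n - m = k + 1 := ⟨n - (m + 1), by omega⟩
    rw [hk] at h ⊢
    rw [primeCounting_succ_of_not_prime h, show n - (m + 1) = k by omega]
  · rw [Nat.sub_eq_zero_of_le hmn, Nat.sub_eq_zero_of_le (by omega)]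

end Nat

theorem succ_mem_insX {p m : ℕ} (hm : m ∈ insX p) (hsub : ¬(p - m).Prime)
    (hadd : ¬(p + m + 1).Prime) : m + 1 ∈ insX p := by
  obtain ⟨-, heq⟩ := hm
  refine ⟨by omega, ?_⟩
  rw [primeCounting_sub_succ_of_not_prime hsub, ← add_assoc,
    primeCounting_succ_of_not_prime hadd, heq]

theorem not_prime_add_add_one {p d : ℕ} (hp : Odd p) (hd : Even d) (h : 1 < p + d) :
    ¬(p + d + 1).Prime := fun hprime => by
  have heven : Even (p + d + 1) := by
    rw [add_assoc]; exact hp.add_odd hd.add_one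
  have := hprime.even_iff.mp heven
  omega

theorem neighbor_prime_of_even_degIns (p : ℕ) (hp : p.Prime)
    (hD : IsGreatest (insX p) (degIns p)) (heven : Even (degIns p))
    (hlt : degIns p < p) :
    (p - degIns p).Prime ∨ (p + degIns p).Prime := by
  obtain ⟨hmem, hmax⟩ := hD
  have hpos : 1 ≤ degIns p := hmem.1
  have hp_odd : Odd p := hp.odd_of_ne_two (by obtain ⟨k, hk⟩ := heven; omega)
  refine .inl (by_contra fun hsub => ?_)
  have hsucc := succ_mem_insX hmem hsub (not_prime_add_add_one hp_odd heven (by omega))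
  exact absurd (hmax hsucc) (by omega)
end

section
/- For a prime p = p_n with n ≥ 3 (so p ≥ 5), min(p_{n+1} − p_n, p_n − p_{n−1}) − 1 ≤ D(p_n) ≤ min(p_{n+1} − p_n, p_n − p_{n−1}). -/
open Nat

lemma pi_nth (k : ℕ) : Nat.primeCounting (Nat.nth Nat.Prime k) = k + 1 := by
  have h := Nat.primeCounting'_nth_eq k
  rw [Nat.primeCounting, Nat.primeCounting', Nat.count_succ]
  rw [Nat.primeCounting'] at h
  simp [h, Nat.prime_nth_prime]

lemma pi_sub_one_nth (k : ℕ) :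
    Nat.primeCounting (Nat.nth Nat.Prime k - 1) = k := by
  rw [Nat.primeCounting_sub_one, Nat.primeCounting'_nth_eq]

lemma pi_le_of_lt_nth {k x : ℕ} (h : x < Nat.nth Nat.Prime k) :
    Nat.primeCounting x ≤ k := by
  calc Nat.primeCounting x ≤ Nat.primeCounting (Nat.nth Nat.Prime k - 1) :=
        Nat.monotone_primeCounting (by omega)
    _ = k := pi_sub_one_nth k

lemma pi_eq_of_between {k x : ℕ} (h1 : Nat.nth Nat.Prime k ≤ x)
    (h2 : x < Nat.nth Nat.Prime (k + 1)) : Nat.primeCounting x = k + 1 := by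
  refine le_antisymm (pi_le_of_lt_nth h2) ?_
  calc k + 1 = Nat.primeCounting (Nat.nth Nat.Prime k) := (pi_nth k).symm
    _ ≤ Nat.primeCounting x := Nat.monotone_primeCounting h1

theorem degIns_near_min_gap (n : ℕ) (hn : 2 ≤ n) :
    min (Nat.nth Nat.Prime (n + 1) - Nat.nth Nat.Prime n)
        (Nat.nth Nat.Prime n - Nat.nth Nat.Prime (n - 1)) - 1
      ≤ degIns (Nat.nth Nat.Prime n) ∧
    degIns (Nat.nth Nat.Prime n) ≤
      min (Nat.nth Nat.Prime (n + 1) - Nat.nth Nat.Prime n)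
          (Nat.nth Nat.Prime n - Nat.nth Nat.Prime (n - 1)) := by
  set p := Nat.nth Nat.Prime n with hp
  set q := Nat.nth Nat.Prime (n + 1) with hq
  set r := Nat.nth Nat.Prime (n - 1) with hr
  have hmono : StrictMono (Nat.nth Nat.Prime) :=
    Nat.nth_strictMono Nat.infinite_setOf_prime
  have hrp : r < p := by
    have := hmono (show n - 1 < n by omega); simpa [hp, hr] using this
  have hpq : p < q := hmono (by omega)
  -- oddness of the primes to get gaps ≥ 2
  have hp2 : 2 < r := by
    have := hmono (show 0 < n - 1 by omega)
    simpa [Nat.nth_prime_zero_eq_two] using this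
  have hoddr : Odd r := (Nat.prime_nth_prime (n-1)).odd_of_ne_two (by omega)
  have hoddp : Odd p := (Nat.prime_nth_prime n).odd_of_ne_two (by omega)
  have hoddq : Odd q := (Nat.prime_nth_prime (n+1)).odd_of_ne_two (by omega)
  have hg1 : 2 ≤ q - p := by
    rcases hoddp with ⟨a, ha⟩; rcases hoddq with ⟨b, hb⟩; omega
  have hg2 : 2 ≤ p - r := by
    rcases hoddp with ⟨a, ha⟩; rcases hoddr with ⟨b, hb⟩; omega
  set M := min (q - p - 1) (p - r) with hM
  have hM1 : 1 ≤ M := by omega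
  have hn1 : n - 1 + 1 = n := by omega
  -- M is in insX p
  have hMmem : M ∈ insX p := by
    refine ⟨hM1, ?_⟩
    have h1 : Nat.primeCounting (p - M) = n := by
      have := pi_eq_of_between (k := n - 1) (x := p - M)
        (by rw [← hr]; omega) (by rw [hn1, ← hp]; omega)
      omega
    have h2 : Nat.primeCounting (p + M) = n + 1 :=
      pi_eq_of_between (k := n) (by omega) (by omega)
    rw [h1, h2]; omega
  -- every element of insX p is at most min (q-p) (p-r)
  have hub : ∀ m ∈ insX p, m ≤ min (q - p) (p - r) := by
    rintro m ⟨hm1, hm2⟩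
    by_contra hcon
    push_neg at hcon
    rcases le_or_gt (q - p) (p - r) with hc | hc
    · -- m > q - p, so p + m ≥ q
      have hge : q ≤ p + m := by omega
      have h2 : n + 2 ≤ Nat.primeCounting (p + m) := by
        calc n + 2 = Nat.primeCounting q := (pi_nth (n+1)).symm
          _ ≤ _ := Nat.monotone_primeCounting hge
      have hlt' : p - m < Nat.nth Nat.Prime n := by rw [← hp]; omega
      have h1 : Nat.primeCounting (p - m) ≤ n := pi_le_of_lt_nth hlt'
      omega
    · -- m > p - r, so p - m < r
      have hlt : p - m < r := by omega
      have hlt' : p - m < Nat.nth Nat.Prime (n - 1) := by rw [← hr]; exact hlt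
      have h1 : Nat.primeCounting (p - m) ≤ n - 1 := pi_le_of_lt_nth hlt'
      have h2 : n + 1 ≤ Nat.primeCounting (p + m) := by
        calc n + 1 = Nat.primeCounting p := (pi_nth n).symm
          _ ≤ _ := Nat.monotone_primeCounting (by omega)
      omega
  have hbdd : BddAbove (insX p) := ⟨min (q - p) (p - r), hub⟩
  constructor
  · have hle : M ≤ degIns p := le_csSup hbdd hMmem
    omega
  · exact csSup_le ⟨M, hMmem⟩ hub
end
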